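/- Let x ∈ ℝ² have irrational slope ξ = x₁/x₂, and let y ∈ ℝ² \ {0} have rational slope a/b in lowest terms (or y₂ = 0, in which case set a = 1, b = 0). Then there exist infinitely many γ ∈ SL(2,ℤ) such that |γx − y| ≤ 2√3 · max(|a|,|b|) · |x|^{1/2} |y|^{1/2} / |γ|^{1/2}. -/

import Mathlib

open Matrix MeasureTheory

/-- Denominator `q k` of the `k`-th convergent of the continued fraction of `ξ`. -/
noncomputable def qden (ξ : ℝ) (k : ℕ) : ℝ := (GenContFract.of ξ).dens k

/-- Numerator `p k` of the `k`-th convergent of the continued fraction of `ξ`. -/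
noncomputable def pnum (ξ : ℝ) (k : ℕ) : ℝ := (GenContFract.of ξ).nums k

/-- Action of an integer matrix on `ℝ²` by left multiplication. -/
noncomputable def act (g : Matrix (Fin 2) (Fin 2) ℤ) (x : Fin 2 → ℝ) : Fin 2 → ℝ :=
  (g.map (Int.cast : ℤ → ℝ)).mulVec x

/-- Sup norm of an integer `2 × 2` matrix. -/
noncomputable def mnorm (g : Matrix (Fin 2) (Fin 2) ℤ) : ℝ :=
  max (max |(g 0 0 : ℝ)| |(g 0 1 : ℝ)|) (max |(g 1 0 : ℝ)| |(g 1 1 : ℝ)|)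

/-- Sup norm on `ℝ²`. -/
noncomputable def vnorm (v : Fin 2 → ℝ) : ℝ := max |v 0| |v 1|

/-- The set of exponents `w` such that `|v α + u| ≤ |v| ^ (-w)` has infinitely many
integer solutions `(v, u)`; its supremum is the irrationality measure `ω(α)`. -/
def omegaSet (α : ℝ) : Set ℝ :=
  {w : ℝ | {p : ℤ × ℤ | |(p.1 : ℝ) * α + (p.2 : ℝ)| ≤ |(p.1 : ℝ)| ^ (-w)}.Infinite}

/-- The set of exponents `μ` such that `|γ x - y| ≤ |γ| ^ (-μ)` for infinitely many
`γ ∈ SL(2, ℤ)`; its supremum is `μ(x, y)`. -/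
def muSet (x y : Fin 2 → ℝ) : Set ℝ :=
  {μ : ℝ | {γ : Matrix (Fin 2) (Fin 2) ℤ |
    γ.det = 1 ∧ vnorm (act γ x - y) ≤ mnorm γ ^ (-μ)}.Infinite}

/-- The set of exponents `μ` such that for all sufficiently large `T` there is
`γ ∈ SL(2, ℤ)` with `|γ| ≤ T` and `|γ x - y| ≤ T ^ (-μ)`; its supremum is `μ̂(x, y)`. -/
def muHatSet (x y : Fin 2 → ℝ) : Set ℝ :=
  {μ : ℝ | ∃ T₀ : ℝ, ∀ T : ℝ, T₀ ≤ T → ∃ γ : Matrix (Fin 2) (Fin 2) ℤ,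
    γ.det = 1 ∧ mnorm γ ≤ T ∧ vnorm (act γ x - y) ≤ T ^ (-μ)}

/-
Write `y = g (τ, 0)` with `g ∈ SL(2, ℤ)` of first column `(a, b)` and entries bounded by
`A = max(|a|, |b|)`. A Dirichlet approximation `p/q` of `ξ` gives `δ = q x₀ - p x₁`, nonzero and
as small as we like; complete `(q, -p)` to the second row of some `h ∈ SL(2, ℤ)` and use the
freedom of adding multiples of it to the first row to get `h x = (σ, δ)` with `|σ - τ| ≤ |δ| / 2`.
Then `γ = g h` has `|γ x - y| ≤ 3/2 A |δ|` and `|γ| ≤ 2 A |h|`, while solving `x = h⁻¹ (σ, δ)`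
for the entries of `h` gives `|h| δ² ≤ 2 |x| (|σ| + |δ|)`; these combine to the bound. Since `δ`
can be read off from `γ`, letting `δ → 0` produces infinitely many `γ`.
-/

lemma Set.infinite_of_forall_exists_pos_lt {α : Type*} {s : Set α} (f : α → ℝ)
    (h : ∀ ε > 0, ∃ a ∈ s, 0 < f a ∧ f a < ε) : s.Infinite := by
  intro hs
  obtain ⟨a₀, ha₀, hpos₀, -⟩ := h 1 one_pos
  obtain ⟨a, ⟨-, hpos⟩, hmin⟩ :=
    Set.exists_min_image (s ∩ {a | 0 < f a}) f (hs.inter_of_left _) ⟨a₀, ha₀, hpos₀⟩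
  obtain ⟨b, hb, hbpos, hblt⟩ := h (f a) hpos
  exact (hmin b ⟨hb, hbpos⟩).not_gt hblt

lemma le_div_sqrt_of_sq_mul_le {e c N : ℝ} (hc : 0 ≤ c) (hN : 0 < N) (h : e ^ 2 * N ≤ c ^ 2) :
    e ≤ c / √N := by
  rw [le_div_iff₀ (Real.sqrt_pos.mpr hN)]
  calc e * √N ≤ |e * √N| := le_abs_self _
    _ ≤ √(c ^ 2) := Real.abs_le_sqrt (by rwa [mul_pow, Real.sq_sqrt hN.le])
    _ = c := Real.sqrt_sq hc

lemma abs_le_mnorm (g : Matrix (Fin 2) (Fin 2) ℤ) (i j : Fin 2) : |(g i j : ℝ)| ≤ mnorm g := by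
  unfold mnorm
  fin_cases i <;> fin_cases j <;> simp

lemma mnorm_nonneg (g : Matrix (Fin 2) (Fin 2) ℤ) : 0 ≤ mnorm g :=
  (abs_nonneg _).trans (abs_le_mnorm g 0 0)

lemma vnorm_nonneg (v : Fin 2 → ℝ) : 0 ≤ vnorm v :=
  (abs_nonneg _).trans (le_max_left _ _)

lemma mnorm_le {g : Matrix (Fin 2) (Fin 2) ℤ} {C : ℝ} (h : ∀ i j, |(g i j : ℝ)| ≤ C) :
    mnorm g ≤ C :=
  max_le (max_le (h 0 0) (h 0 1)) (max_le (h 1 0) (h 1 1))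

lemma mnorm_mul_le_of_forall {g : Matrix (Fin 2) (Fin 2) ℤ} {c C : ℝ} (hc : 0 ≤ c)
    (h : ∀ i j, |(g i j : ℝ)| * c ≤ C) : mnorm g * c ≤ C := by
  simp only [mnorm, max_mul_of_nonneg _ _ hc]
  exact max_le (max_le (h 0 0) (h 0 1)) (max_le (h 1 0) (h 1 1))

lemma mnorm_pos_of_det_eq_one {g : Matrix (Fin 2) (Fin 2) ℤ} (hg : g.det = 1) : 0 < mnorm g := by
  by_contra! h
  have hzero : ∀ i j, g i j = 0 := fun i j => by
    exact_mod_cast abs_nonpos_iff.mp ((abs_le_mnorm g i j).trans h)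
  simp [det_fin_two, hzero] at hg

lemma act_mul (g h : Matrix (Fin 2) (Fin 2) ℤ) (x : Fin 2 → ℝ) :
    act (g * h) x = act g (act h x) := by
  simp only [act, mulVec_mulVec, ← Int.coe_castRingHom, ← RingHom.mapMatrix_apply, map_mul]

lemma act_sub (g : Matrix (Fin 2) (Fin 2) ℤ) (v w : Fin 2 → ℝ) :
    act g (v - w) = act g v - act g w :=
  mulVec_sub _ _ _

lemma act_apply (g : Matrix (Fin 2) (Fin 2) ℤ) (w : Fin 2 → ℝ) (i : Fin 2) :
    act g w i = g i 0 * w 0 + g i 1 * w 1 := by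
  simp [act, mulVec, dotProduct, Fin.sum_univ_two]

lemma vnorm_act_le (g : Matrix (Fin 2) (Fin 2) ℤ) (w : Fin 2 → ℝ) :
    vnorm (act g w) ≤ mnorm g * (|w 0| + |w 1|) := by
  have key : ∀ i, |act g w i| ≤ mnorm g * (|w 0| + |w 1|) := fun i => by
    rw [act_apply, mul_add]
    refine (abs_add_le _ _).trans (add_le_add ?_ ?_) <;> rw [abs_mul] <;>
      exact mul_le_mul_of_nonneg_right (abs_le_mnorm g _ _) (abs_nonneg _)
  exact max_le (key 0) (key 1)

lemma mnorm_mul_le (g h : Matrix (Fin 2) (Fin 2) ℤ) : mnorm (g * h) ≤ 2 * mnorm g * mnorm h := by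
  refine mnorm_le fun i j => ?_
  rw [mul_apply, Fin.sum_univ_two]
  push_cast
  calc |(g i 0 : ℝ) * h 0 j + g i 1 * h 1 j|
      ≤ |(g i 0 : ℝ)| * |(h 0 j : ℝ)| + |(g i 1 : ℝ)| * |(h 1 j : ℝ)| := by
        rw [← abs_mul, ← abs_mul]; exact abs_add_le _ _
    _ ≤ mnorm g * mnorm h + mnorm g * mnorm h := by
        gcongr <;> first | exact abs_le_mnorm _ _ _ | exact mnorm_nonneg g
    _ = 2 * mnorm g * mnorm h := by ring

lemma det_mul_act_eq (g : Matrix (Fin 2) (Fin 2) ℤ) (w : Fin 2 → ℝ) :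
    g 0 0 * act g w 1 - g 1 0 * act g w 0 = g.det * w 1 := by
  simp only [act_apply, det_fin_two]
  push_cast
  ring

lemma exists_mul_sub_mul_eq_one_abs_le {a b : ℤ} (hab : IsCoprime a b) :
    ∃ u v : ℤ, a * v - b * u = 1 ∧ |u| ≤ max |a| |b| ∧ |v| ≤ max |a| |b| := by
  obtain ⟨c, d, hcd⟩ := hab
  rcases eq_or_ne b 0 with rfl | hb
  · rw [mul_zero, add_zero] at hcd
    refine ⟨0, c, by linarith, by simp, ?_⟩
    rcases Int.eq_one_or_neg_one_of_mul_eq_one' hcd with ⟨rfl, rfl⟩ | ⟨rfl, rfl⟩ <;> simp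
  · have hm : 0 < b.natAbs := Int.natAbs_pos.mpr hb
    have hv₁ := Int.le_bmod (x := c) hm
    have hv₂ := Int.bmod_le (x := c) hm
    have hdvd := Int.dvd_bmod_sub_self (x := c) (m := b.natAbs)
    rw [Int.natCast_natAbs] at hv₁ hv₂ hdvd
    generalize c.bmod b.natAbs = v at hv₁ hv₂ hdvd
    have hvb : 2 * |v| ≤ |b| := by
      rcases abs_cases v with ⟨h, -⟩ | ⟨h, -⟩ <;> rw [h] <;> omega
    obtain ⟨k, hk⟩ : b ∣ v - c := (abs_dvd b _).mp hdvd
    refine ⟨a * k - d, v, by linear_combination hcd + a * hk, ?_, ?_⟩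
    · have hbu : |b| * |a * k - d| ≤ |a| * |v| + 1 := by
        have hbu' : b * (a * k - d) = a * v - 1 := by linear_combination -a * hk - hcd
        rw [← abs_mul, ← abs_mul, hbu']
        exact (abs_sub _ _).trans_eq (by rw [abs_one])
      have hb1 : 1 ≤ |b| := Int.one_le_abs hb
      by_contra! hu
      have hua : |a| + 1 ≤ |a * k - d| := by have := le_max_left |a| |b|; omega
      have hub : |b| + 1 ≤ |a * k - d| := by have := le_max_right |a| |b|; omega
      nlinarith [abs_nonneg a, abs_nonneg v]
    · have := abs_nonneg v
      exact le_max_of_le_right (by linarith)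

lemma exists_det_eq_one_mnorm_eq {a b : ℤ} (hab : IsCoprime a b) :
    ∃ g : Matrix (Fin 2) (Fin 2) ℤ,
      g.det = 1 ∧ g 0 0 = a ∧ g 1 0 = b ∧ mnorm g = max |(a : ℝ)| |(b : ℝ)| := by
  obtain ⟨u, v, huv, hu, hv⟩ := exists_mul_sub_mul_eq_one_abs_le hab
  refine ⟨!![a, u; b, v], by rw [det_fin_two_of]; linear_combination huv, rfl, rfl, ?_⟩
  have hu' : |(u : ℝ)| ≤ max |(a : ℝ)| |(b : ℝ)| := by exact_mod_cast hu
  have hv' : |(v : ℝ)| ≤ max |(a : ℝ)| |(b : ℝ)| := by exact_mod_cast hv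
  simp only [mnorm, of_apply, cons_val', cons_val_zero, cons_val_one, empty_val', cons_val_fin_one]
  apply le_antisymm
  · exact max_le (max_le (le_max_left _ _) hu') (max_le (le_max_right _ _) hv')
  · exact max_le_max (le_max_left _ _) (le_max_left _ _)

lemma exists_coprime_abs_mul_sub_mul_le {x₀ x₁ : ℝ} (hx₁ : x₁ ≠ 0) {N : ℕ} (hN : 0 < N) :
    ∃ p q : ℤ, IsCoprime p q ∧ 0 < q ∧ q ≤ N ∧ |q * x₀ - p * x₁| ≤ |x₁| / (N + 1) := by
  obtain ⟨r, hr, hden⟩ := Real.exists_rat_abs_sub_le_and_den_le (x₀ / x₁) hN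
  have hq : (0 : ℝ) < r.den := by exact_mod_cast r.pos
  refine ⟨r.num, r.den, Int.isCoprime_iff_gcd_eq_one.mpr r.reduced, by exact_mod_cast r.pos,
    by exact_mod_cast hden, ?_⟩
  have : (r.den : ℝ) * x₀ - r.num * x₁ = x₁ * r.den * (x₀ / x₁ - r) := by
    rw [Rat.cast_def]; field_simp
  rw [Int.cast_natCast, this, abs_mul, abs_mul, abs_of_pos hq]
  calc |x₁| * r.den * |x₀ / x₁ - r| ≤ |x₁| * r.den * (1 / ((N + 1) * r.den)) := by gcongr
    _ = |x₁| / (N + 1) := by field_simp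

lemma exists_mul_add_mul_eq_neg_one_abs_sub_le {p q : ℤ} (hpq : IsCoprime p q) (x : Fin 2 → ℝ)
    (τ : ℝ) (hδ : q * x 0 - p * x 1 ≠ 0) :
    ∃ m n : ℤ, m * p + n * q = -1 ∧ |m * x 0 + n * x 1 - τ| ≤ |q * x 0 - p * x 1| / 2 := by
  obtain ⟨c, d, hcd⟩ := hpq
  set δ := q * x 0 - p * x 1
  set t := round ((τ + c * x 0 + d * x 1) / δ)
  refine ⟨t * q - c, -t * p - d, by linear_combination -hcd, ?_⟩
  have : ((t * q - c : ℤ) : ℝ) * x 0 + ((-t * p - d : ℤ) : ℝ) * x 1 - τ =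
      -(δ * ((τ + c * x 0 + d * x 1) / δ - t)) := by
    push_cast; field_simp; ring
  rw [this, abs_neg, abs_mul]
  linarith [mul_le_mul_of_nonneg_left (abs_sub_round ((τ + c * x 0 + d * x 1) / δ)) (abs_nonneg δ)]

lemma mnorm_mul_act_sq_le {h : Matrix (Fin 2) (Fin 2) ℤ} (hh : h.det = 1) {x : Fin 2 → ℝ}
    (hx : x 1 ≠ 0) (h₁₀ : h 1 0 ≠ 0) (hδ : |h 1 0 * act h x 1| ≤ |x 1|) :
    mnorm h * act h x 1 ^ 2 ≤ 2 * vnorm x * (|act h x 0| + |act h x 1|) := by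
  have hσ := act_apply h x 0
  have hδ' := act_apply h x 1
  have hdet : (h 0 0 * h 1 1 - h 0 1 * h 1 0 : ℝ) = 1 := by
    rw [det_fin_two] at hh; exact_mod_cast hh
  set σ := act h x 0
  set δ := act h x 1
  set X := vnorm x
  have hx₀ : |x 0| ≤ X := le_max_left _ _
  have hx₁ : |x 1| ≤ X := le_max_right _ _
  have hx₁pos : 0 < |x 1| := abs_pos.mpr hx
  have h₁₀' : 1 ≤ |(h 1 0 : ℝ)| := by exact_mod_cast Int.one_le_abs h₁₀
  rw [abs_mul] at hδ
  have hδx : |δ| ≤ |x 1| := le_trans (le_mul_of_one_le_left (abs_nonneg _) h₁₀') hδ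
  -- the two coordinates of `x = h⁻¹ (σ, δ)`, and the definition of `δ`
  have e₀₀ : (h 0 0 : ℝ) * δ = x 1 + h 1 0 * σ := by
    rw [hσ, hδ']; linear_combination x 1 * hdet
  have e₀₁ : (h 0 1 : ℝ) * δ = h 1 1 * σ - x 0 := by
    rw [hσ, hδ']; linear_combination -x 0 * hdet
  have e₁₁ : (h 1 1 : ℝ) * x 1 = δ - h 1 0 * x 0 := by
    rw [hδ']; ring
  have h₁₀δ : |(h 1 0 : ℝ)| * |δ| ≤ X := hδ.trans hx₁
  have a₀₀ : |(h 0 0 : ℝ)| * |δ| ≤ X + |(h 1 0 : ℝ)| * |σ| := by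
    rw [← abs_mul, e₀₀, ← abs_mul]; linarith [abs_add_le (x 1) (h 1 0 * σ)]
  have a₁₁ : |(h 1 1 : ℝ)| * |x 1| ≤ |δ| + |(h 1 0 : ℝ)| * X := by
    rw [← abs_mul, e₁₁]
    nlinarith [abs_sub δ (h 1 0 * x 0), abs_mul (h 1 0 : ℝ) (x 0), abs_nonneg (h 1 0 : ℝ)]
  have b₁₁ : |(h 1 1 : ℝ)| * |δ| ≤ 2 * X := by
    refine le_of_mul_le_mul_right ?_ hx₁pos
    nlinarith [abs_nonneg δ, abs_nonneg (h 1 1 : ℝ)]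
  have a₀₁ : |(h 0 1 : ℝ)| * |δ| ≤ |(h 1 1 : ℝ)| * |σ| + X := by
    rw [← abs_mul, e₀₁, ← abs_mul]; linarith [abs_sub (h 1 1 * σ) (x 0)]
  have hδ0 := abs_nonneg δ
  have hσ0 := abs_nonneg σ
  rw [← sq_abs δ]
  refine mnorm_mul_le_of_forall (sq_nonneg _) fun i j => ?_
  fin_cases i <;> fin_cases j <;> simp only [Fin.zero_eta, Fin.mk_one] <;>
    nlinarith [abs_nonneg (h 1 0 : ℝ)]

lemma exists_det_eq_one_act_approx {x : Fin 2 → ℝ} (hx : x 1 ≠ 0) (hξ : Irrational (x 0 / x 1))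
    (τ : ℝ) {ε : ℝ} (hε : 0 < ε) :
    ∃ h : Matrix (Fin 2) (Fin 2) ℤ, h.det = 1 ∧ 0 < |act h x 1| ∧ |act h x 1| < ε ∧
      |act h x 0 - τ| ≤ |act h x 1| / 2 ∧
      mnorm h * act h x 1 ^ 2 ≤ 2 * vnorm x * (|act h x 0| + |act h x 1|) := by
  have hx₁ : 0 < |x 1| := abs_pos.mpr hx
  obtain ⟨N, hN⟩ := exists_nat_gt (|x 1| / ε)
  have hN₀ : (0 : ℝ) < N := (div_pos hx₁ hε).trans hN
  obtain ⟨p, q, hpq, hq, hqN, hδ⟩ := exists_coprime_abs_mul_sub_mul_le (x₀ := x 0) hx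
    (N := N) (by exact_mod_cast hN₀)
  have hδ₀ : (q : ℝ) * x 0 - p * x 1 ≠ 0 := by
    intro h0
    refine hξ.ne_rat (p / q) ?_
    push_cast
    rw [div_eq_div_iff hx (by positivity)]
    linear_combination h0
  obtain ⟨m, n, hmn, hσ⟩ := exists_mul_add_mul_eq_neg_one_abs_sub_le hpq x τ hδ₀
  have hσ' : act !![m, n; q, -p] x 0 = m * x 0 + n * x 1 := by simp [act_apply]
  have hδ' : act !![m, n; q, -p] x 1 = q * x 0 - p * x 1 := by simp [act_apply]; ring
  have hdet : (!![m, n; q, -p]).det = 1 := by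
    rw [det_fin_two_of]; linear_combination -hmn
  have hδN : |(q : ℝ) * x 0 - p * x 1| < ε := by
    refine hδ.trans_lt ((div_lt_iff₀ (by positivity)).mpr ?_)
    rw [div_lt_iff₀ hε] at hN
    nlinarith
  refine ⟨_, hdet, by rw [hδ']; positivity, hδ' ▸ hδN, hσ' ▸ hδ' ▸ hσ,
    mnorm_mul_act_sq_le hdet hx (by simpa using hq.ne') ?_⟩
  have hq' : (0 : ℝ) < q := by exact_mod_cast hq
  have hqN' : (q : ℝ) ≤ N := by exact_mod_cast hqN
  rw [hδ', abs_mul]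
  simp only [of_apply, cons_val_one, cons_val_zero, abs_of_pos hq']
  calc (q : ℝ) * |q * x 0 - p * x 1| ≤ (N + 1) * (|x 1| / (N + 1)) := by gcongr; linarith
    _ = |x 1| := by field_simp

lemma vnorm_act_mul_sub_le {g h : Matrix (Fin 2) (Fin 2) ℤ} (hg : g.det = 1) (hh : h.det = 1)
    {x : Fin 2 → ℝ} {τ : ℝ} (hσ : |act h x 0 - τ| ≤ |act h x 1| / 2)
    (hδ : 9 * |act h x 1| ≤ 2 * |τ|)
    (hN : mnorm h * act h x 1 ^ 2 ≤ 2 * vnorm x * (|act h x 0| + |act h x 1|)) :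
    vnorm (act (g * h) x - act g ![τ, 0]) ≤
      2 * √3 * mnorm g * √(vnorm x) * √(mnorm g * |τ|) / √(mnorm (g * h)) := by
  set σ := act h x 0
  set δ := act h x 1
  set M := mnorm g
  set X := vnorm x
  have hM := mnorm_nonneg g
  have hX : 0 ≤ X := vnorm_nonneg x
  have hτ := abs_nonneg τ
  have he : vnorm (act (g * h) x - act g ![τ, 0]) ≤ 3 / 2 * M * |δ| := by
    rw [act_mul, ← act_sub]
    refine (vnorm_act_le g _).trans ?_
    simp only [Pi.sub_apply, cons_val_zero, cons_val_one, sub_zero]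
    nlinarith
  have hgh : mnorm (g * h) ≤ 2 * M * mnorm h := mnorm_mul_le g h
  -- `9 |δ| ≤ 2 |τ|` is what makes `|σ| + |δ| ≤ 4/3 |τ|`
  have hhδ : mnorm h * δ ^ 2 ≤ 8 / 3 * X * |τ| := by
    nlinarith [abs_sub_abs_le_abs_sub σ τ]
  refine le_div_sqrt_of_sq_mul_le (by positivity) (mnorm_pos_of_det_eq_one (by simp [hg, hh])) ?_
  have hc : (2 * √3 * M * √X * √(M * |τ|)) ^ 2 = 12 * M ^ 3 * X * |τ| := by
    rw [mul_pow, mul_pow, mul_pow, mul_pow, Real.sq_sqrt (by norm_num), Real.sq_sqrt hX,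
      Real.sq_sqrt (by positivity)]
    ring
  rw [hc]
  have he₀ := vnorm_nonneg (act (g * h) x - act g ![τ, 0])
  calc vnorm (act (g * h) x - act g ![τ, 0]) ^ 2 * mnorm (g * h)
      ≤ (3 / 2 * M * |δ|) ^ 2 * (2 * M * mnorm h) := by gcongr; exact mnorm_nonneg _
    _ = 9 / 2 * M ^ 3 * (mnorm h * δ ^ 2) := by rw [mul_pow _ |δ|, sq_abs]; ring
    _ ≤ 9 / 2 * M ^ 3 * (8 / 3 * X * |τ|) := by gcongr
    _ = 12 * M ^ 3 * X * |τ| := by ring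

lemma exists_eq_mul_of_slope {y : Fin 2 → ℝ} (hy : y ≠ 0) {a b : ℤ} (hab : IsCoprime a b)
    (hslope : (y 1 ≠ 0 ∧ y 0 * (b : ℝ) = y 1 * (a : ℝ)) ∨ (y 1 = 0 ∧ a = 1 ∧ b = 0)) :
    ∃ τ : ℝ, τ ≠ 0 ∧ y 0 = τ * a ∧ y 1 = τ * b := by
  rcases hslope with ⟨hy₁, hyab⟩ | ⟨hy₁, rfl, rfl⟩
  · have hb : (b : ℝ) ≠ 0 := by
      rintro hb
      obtain rfl : b = 0 := by exact_mod_cast hb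
      have ha : (a : ℝ) ≠ 0 := by
        rcases Int.isUnit_iff.mp (isCoprime_zero_right.mp hab) with rfl | rfl <;> norm_num
      simp [hy₁, ha] at hyab
    refine ⟨y 1 / b, div_ne_zero hy₁ hb, ?_, by field_simp⟩
    field_simp
    linear_combination hyab
  · refine ⟨y 0, fun h0 => hy ?_, by simp, by simp [hy₁]⟩
    ext i; fin_cases i <;> simp [h0, hy₁]

/-- approximation to a nonzero point `y` of rational slope `a/b` (or `y₂ = 0`,
`a = 1`, `b = 0`): infinitely many `γ ∈ SL(2, ℤ)` with
`|γ x - y| ≤ 2√3 max(|a|, |b|) |x|^{1/2} |y|^{1/2} / |γ|^{1/2}`. -/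
theorem stmt5 (x y : Fin 2 → ℝ) (hx2 : x 1 ≠ 0) (hξ : Irrational (x 0 / x 1))
    (hy : y ≠ 0) (a b : ℤ) (hab : IsCoprime a b)
    (hslope : (y 1 ≠ 0 ∧ y 0 * (b : ℝ) = y 1 * (a : ℝ)) ∨ (y 1 = 0 ∧ a = 1 ∧ b = 0)) :
    {γ : Matrix (Fin 2) (Fin 2) ℤ | γ.det = 1 ∧
      vnorm (act γ x - y) ≤ 2 * Real.sqrt 3 * max |(a : ℝ)| |(b : ℝ)| *
        Real.sqrt (vnorm x) * Real.sqrt (vnorm y) / Real.sqrt (mnorm γ)}.Infinite := by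
  obtain ⟨τ, hτ, hy₀, hy₁⟩ := exists_eq_mul_of_slope hy hab hslope
  obtain ⟨g, hg, hg₀, hg₁, hgM⟩ := exists_det_eq_one_mnorm_eq hab
  have hvy : vnorm y = mnorm g * |τ| := by
    rw [vnorm, hy₀, hy₁, abs_mul, abs_mul, ← mul_max_of_nonneg _ _ (abs_nonneg τ), hgM, mul_comm]
  have hyg : y = act g ![τ, 0] := by
    ext i; fin_cases i <;> simp [act_apply, hg₀, hg₁, hy₀, hy₁, mul_comm]
  rw [← hgM, hvy, hyg]
  -- for `γ = g h` this is `|(h x) 1|`, by `det_mul_act_eq`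
  refine Set.infinite_of_forall_exists_pos_lt (fun γ => |g 0 0 * act γ x 1 - g 1 0 * act γ x 0|)
    fun ε hε => ?_
  obtain ⟨h, hh, hpos, hlt, hσ, hN⟩ :=
    exists_det_eq_one_act_approx hx2 hξ τ (lt_min hε (by positivity : 0 < 2 * |τ| / 9))
  refine ⟨g * h, ⟨by simp [hg, hh], vnorm_act_mul_sub_le hg hh hσ ?_ hN⟩, ?_⟩
  · linarith [hlt.trans_le (min_le_right _ _)]
  · rw [act_mul, det_mul_act_eq, hg, Int.cast_one, one_mul]
    exact ⟨hpos, hlt.trans_le (min_le_left _ _)⟩
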